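/- arXiv:1408.2551 — 7 statements merged into one kernel-verified Lean document; each statement's English description precedes it below -/
import Mathlib

section
/- Let G be a multitree. Then for every node j ∈ V, the six sets {j}, sanc(j), sdes(j), sibling(j), coparent(j), nonrelative(j) are pairwise disjoint and their union is V. -/
variable {V : Type*}

/-- `reaches E i j` : there is a directed path from `i` to `j`
(reflexive-transitive closure of the edge relation `E`). -/
def reaches (E : V → V → Prop) : V → V → Prop := Relation.ReflTransGen E

/-- ancestors of `i` (includes `i` itself) -/
def anc (E : V → V → Prop) (i : V) : Set V := {j | reaches E j i}

/-- descendants of `i` (includes `i` itself) -/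
def des (E : V → V → Prop) (i : V) : Set V := {j | reaches E i j}

/-- strict ancestors -/
def sanc (E : V → V → Prop) (i : V) : Set V := anc E i \ {i}

/-- strict descendants -/
def sdes (E : V → V → Prop) (i : V) : Set V := des E i \ {i}

/-- all nodes path-connected to `i` -/
def funnel (E : V → V → Prop) (i : V) : Set V := anc E i ∪ des E i

/-- `G` is a DAG: reachability is antisymmetric -/
def IsDAG (E : V → V → Prop) : Prop :=
  ∀ i j : V, reaches E i j → reaches E j i → i = j

/-- nodes `i, a, b, j` form a diamond -/
def IsDiamond (E : V → V → Prop) (i a b j : V) : Prop :=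
  reaches E i a ∧ reaches E a j ∧ reaches E i b ∧ reaches E b j ∧
  ¬ reaches E a b ∧ ¬ reaches E b a

/-- a multitree is a DAG with no diamonds -/
def IsMultitree (E : V → V → Prop) : Prop :=
  IsDAG E ∧ ∀ i a b j : V, ¬ IsDiamond E i a b j

/-- siblings of `j` -/
def sibling (E : V → V → Prop) (j : V) : Set V :=
  (⋃ i ∈ anc E j, des E i) \ funnel E j

/-- co-parents of `j` -/
def coparent (E : V → V → Prop) (j : V) : Set V :=
  (⋃ i ∈ des E j, anc E i) \ funnel E j

/-- non-relatives of `j` -/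
def nonrelative (E : V → V → Prop) (j : V) : Set V :=
  Set.univ \ (funnel E j ∪ coparent E j ∪ sibling E j)

/-- In a multitree, for every node `j`, the six sets
`{j}`, `sanc j`, `sdes j`, `sibling j`, `coparent j`, `nonrelative j`
are pairwise disjoint and their union is all of `V`. -/
theorem six_sets_partition [Fintype V] (E : V → V → Prop) (hG : IsMultitree E) (j : V) :
    ([({j} : Set V), sanc E j, sdes E j, sibling E j, coparent E j,
        nonrelative E j].Pairwise Disjoint) ∧
    ({j} : Set V) ∪ sanc E j ∪ sdes E j ∪ sibling E j ∪ coparent E j ∪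
        nonrelative E j = Set.univ := by
  obtain ⟨hdag, hdia⟩ := hG
  have hjf : j ∈ funnel E j := Or.inl Relation.ReflTransGen.refl
  have hsanc_f : sanc E j ⊆ funnel E j := fun x hx => Or.inl hx.1
  have hsdes_f : sdes E j ⊆ funnel E j := fun x hx => Or.inr hx.1
  -- disjointness facts
  have d12 : Disjoint ({j} : Set V) (sanc E j) := by
    rw [Set.disjoint_left]; rintro x rfl hx; exact hx.2 rfl
  have d13 : Disjoint ({j} : Set V) (sdes E j) := by
    rw [Set.disjoint_left]; rintro x rfl hx; exact hx.2 rfl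
  have d14 : Disjoint ({j} : Set V) (sibling E j) := by
    rw [Set.disjoint_left]; rintro x rfl hx; exact hx.2 hjf
  have d15 : Disjoint ({j} : Set V) (coparent E j) := by
    rw [Set.disjoint_left]; rintro x rfl hx; exact hx.2 hjf
  have d16 : Disjoint ({j} : Set V) (nonrelative E j) := by
    rw [Set.disjoint_left]; rintro x rfl hx; exact hx.2 (Or.inl (Or.inl hjf))
  have d23 : Disjoint (sanc E j) (sdes E j) := by
    rw [Set.disjoint_left]; rintro x ⟨hx1, hx2⟩ ⟨hy1, _⟩
    exact hx2 (hdag x j hx1 hy1)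
  have d24 : Disjoint (sanc E j) (sibling E j) := by
    rw [Set.disjoint_left]; intro x hx hy; exact hy.2 (hsanc_f hx)
  have d25 : Disjoint (sanc E j) (coparent E j) := by
    rw [Set.disjoint_left]; intro x hx hy; exact hy.2 (hsanc_f hx)
  have d26 : Disjoint (sanc E j) (nonrelative E j) := by
    rw [Set.disjoint_left]; intro x hx hy; exact hy.2 (Or.inl (Or.inl (hsanc_f hx)))
  have d34 : Disjoint (sdes E j) (sibling E j) := by
    rw [Set.disjoint_left]; intro x hx hy; exact hy.2 (hsdes_f hx)
  have d35 : Disjoint (sdes E j) (coparent E j) := by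
    rw [Set.disjoint_left]; intro x hx hy; exact hy.2 (hsdes_f hx)
  have d36 : Disjoint (sdes E j) (nonrelative E j) := by
    rw [Set.disjoint_left]; intro x hx hy; exact hy.2 (Or.inl (Or.inl (hsdes_f hx)))
  have d45 : Disjoint (sibling E j) (coparent E j) := by
    rw [Set.disjoint_left]
    rintro x ⟨hx1, hxf⟩ ⟨hx2, -⟩
    simp only [Set.mem_iUnion, anc, des, Set.mem_setOf_eq] at hx1 hx2
    obtain ⟨i, hij, hix⟩ := hx1
    obtain ⟨k, hjk, hxk⟩ := hx2
    exact hdia i x j k ⟨hix, hxk, hij, hjk,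
      fun h => hxf (Or.inl h), fun h => hxf (Or.inr h)⟩
  have d46 : Disjoint (sibling E j) (nonrelative E j) := by
    rw [Set.disjoint_left]; intro x hx hy; exact hy.2 (Or.inr hx)
  have d56 : Disjoint (coparent E j) (nonrelative E j) := by
    rw [Set.disjoint_left]; intro x hx hy; exact hy.2 (Or.inl (Or.inr hx))
  refine ⟨?_, ?_⟩
  · refine List.Pairwise.cons ?_ (List.Pairwise.cons ?_ (List.Pairwise.cons ?_
      (List.Pairwise.cons ?_ (List.Pairwise.cons ?_ (List.pairwise_singleton _ _))))) <;>
    · intro a ha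
      fin_cases ha <;>
        first
          | exact d12 | exact d13 | exact d14 | exact d15 | exact d16
          | exact d23 | exact d24 | exact d25 | exact d26
          | exact d34 | exact d35 | exact d36
          | exact d45 | exact d46 | exact d56
  · ext x
    simp only [Set.mem_union, Set.mem_univ, iff_true]
    by_cases h1 : x ∈ funnel E j
    · rcases h1 with h1 | h1
      · by_cases hx : x = j
        · exact Or.inl (Or.inl (Or.inl (Or.inl (Or.inl hx))))
        · exact Or.inl (Or.inl (Or.inl (Or.inl (Or.inr ⟨h1, hx⟩))))
      · by_cases hx : x = j
        · exact Or.inl (Or.inl (Or.inl (Or.inl (Or.inl hx))))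
        · exact Or.inl (Or.inl (Or.inl (Or.inr ⟨h1, hx⟩)))
    · by_cases h4 : x ∈ sibling E j
      · exact Or.inl (Or.inl (Or.inr h4))
      · by_cases h5 : x ∈ coparent E j
        · exact Or.inl (Or.inr h5)
        · exact Or.inr ⟨trivial, by
            rintro (h | h)
            · rcases h with h | h
              · exact h1 h
              · exact h5 h
            · exact h4 h⟩
end

section
/- Let G be a multitree. Then for every node j ∈ V, the siblings and co-parents of j are disjoint: sibling(j) ∩ coparent(j) = ∅. -/
variable {V : Type*}

/-- In a multitree, siblings and co-parents of any node are disjoint. -/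
theorem sibling_inter_coparent_empty [Fintype V] (E : V → V → Prop)
    (hG : IsMultitree E) (j : V) :
    sibling E j ∩ coparent E j = ∅ := by
  ext k
  simp only [Set.mem_inter_iff, Set.mem_empty_iff_false, iff_false]
  rintro ⟨⟨hs, hnf⟩, ⟨hc, -⟩⟩
  simp only [Set.mem_iUnion, funnel, Set.mem_union] at hs hc hnf
  obtain ⟨i, hij, hik⟩ := hs
  obtain ⟨m, hjm, hkm⟩ := hc
  push_neg at hnf
  exact hG.2 i j k m ⟨hij, hjm, hik, hkm, fun h => hnf.2 h, fun h => hnf.1 h⟩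
end

section
/- Let G be a multitree and j ∈ V. Index the six aggregation classes as C₁ = sanc(j), C₂ = coparent(j), C₃ = {j}, C₄ = nonrelative(j), C₅ = sdes(j), C₆ = sibling(j). If i ∈ C_a, k ∈ C_b with a ≠ b and (i, k) ∈ E, then the ordered pair (a, b) belongs to {(1,3), (1,5), (1,6), (2,4), (2,5), (2,6), (3,5), (4,6)}; equivalently, for every ordered pair (a, b) with a ≠ b outside this list, there is no edge of G from any node of C_a to any node of C_b. -/
variable {V : Type*}

section Helpers
variable {E : V → V → Prop} {j x : V}

lemma mem_sanc_iff : x ∈ sanc E j ↔ reaches E x j ∧ x ≠ j := Iff.rfl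

lemma mem_sdes_iff : x ∈ sdes E j ↔ reaches E j x ∧ x ≠ j := Iff.rfl

lemma mem_funnel_iff : x ∈ funnel E j ↔ reaches E x j ∨ reaches E j x := Iff.rfl

lemma mem_coparent_iff :
    x ∈ coparent E j ↔
      (∃ m, reaches E j m ∧ reaches E x m) ∧ ¬ reaches E x j ∧ ¬ reaches E j x := by
  simp only [coparent, Set.mem_diff, Set.mem_iUnion, mem_funnel_iff]
  constructor
  · rintro ⟨⟨m, hm1, hm2⟩, h2⟩
    exact ⟨⟨m, hm1, hm2⟩, fun h => h2 (Or.inl h), fun h => h2 (Or.inr h)⟩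
  · rintro ⟨⟨m, hm1, hm2⟩, h2, h3⟩
    exact ⟨⟨m, hm1, hm2⟩, fun h => h.elim h2 h3⟩

lemma mem_sibling_iff :
    x ∈ sibling E j ↔
      (∃ m, reaches E m j ∧ reaches E m x) ∧ ¬ reaches E x j ∧ ¬ reaches E j x := by
  simp only [sibling, Set.mem_diff, Set.mem_iUnion, mem_funnel_iff]
  constructor
  · rintro ⟨⟨m, hm1, hm2⟩, h2⟩
    exact ⟨⟨m, hm1, hm2⟩, fun h => h2 (Or.inl h), fun h => h2 (Or.inr h)⟩
  · rintro ⟨⟨m, hm1, hm2⟩, h2, h3⟩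
    exact ⟨⟨m, hm1, hm2⟩, fun h => h.elim h2 h3⟩

lemma mem_nonrelative_iff :
    x ∈ nonrelative E j ↔
      (∀ m, reaches E m j → reaches E m x → False) ∧
      (∀ m, reaches E j m → reaches E x m → False) := by
  simp only [nonrelative, Set.mem_diff, Set.mem_univ, true_and, Set.mem_union,
    mem_funnel_iff, mem_coparent_iff, mem_sibling_iff]
  constructor
  · intro h
    have hxj : ¬ reaches E x j := fun hx => h (Or.inl (Or.inl (Or.inl hx)))
    have hjx : ¬ reaches E j x := fun hx => h (Or.inl (Or.inl (Or.inr hx)))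
    refine ⟨fun m hm1 hm2 => h (Or.inr ⟨⟨m, hm1, hm2⟩, hxj, hjx⟩),
      fun m hm1 hm2 => h (Or.inl (Or.inr ⟨⟨m, hm1, hm2⟩, hxj, hjx⟩))⟩
  · rintro ⟨h1, h2⟩ (((hx | hx) | ⟨⟨m, hm1, hm2⟩, -, -⟩) | ⟨⟨m, hm1, hm2⟩, -, -⟩)
    · exact h1 x hx Relation.ReflTransGen.refl
    · exact h1 j Relation.ReflTransGen.refl hx
    · exact h2 m hm1 hm2
    · exact h1 m hm1 hm2

end Helpers

/-- In a multitree, with the six aggregation classes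
`C₁ = sanc j`, `C₂ = coparent j`, `C₃ = {j}`, `C₄ = nonrelative j`,
`C₅ = sdes j`, `C₆ = sibling j`, every edge of `G` between two distinct
classes goes from `C_a` to `C_b` with `(a, b)` in the list
`{(1,3), (1,5), (1,6), (2,4), (2,5), (2,6), (3,5), (4,6)}`. -/


theorem aggregated_graph_edges [Fintype V] (E : V → V → Prop)
    (hG : IsMultitree E) (j : V)
    (C : ℕ → Set V)
    (hC1 : C 1 = sanc E j) (hC2 : C 2 = coparent E j) (hC3 : C 3 = {j})
    (hC4 : C 4 = nonrelative E j) (hC5 : C 5 = sdes E j) (hC6 : C 6 = sibling E j)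
    (a b : ℕ) (ha : 1 ≤ a ∧ a ≤ 6) (hb : 1 ≤ b ∧ b ≤ 6) (hab : a ≠ b)
    (i k : V) (hi : i ∈ C a) (hk : k ∈ C b) (hE : E i k) :
    (a, b) ∈ ({(1,3), (1,5), (1,6), (2,4), (2,5), (2,6), (3,5), (4,6)} :
      Set (ℕ × ℕ)) := by
  obtain ⟨hdag, hdia⟩ := hG
  have rik : reaches E i k := Relation.ReflTransGen.single hE
  obtain ⟨ha1, ha6⟩ := ha
  obtain ⟨hb1, hb6⟩ := hb
  interval_cases a <;> interval_cases b <;>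
    simp only [hC1, hC2, hC3, hC4, hC5, hC6] at hi hk <;>
    first
      | exact absurd rfl hab
      | (simp only [Set.mem_insert_iff, Set.mem_singleton_iff, Prod.mk.injEq]
         norm_num)
      | exfalso
  -- (1,2)
  · obtain ⟨hij, hinej⟩ := mem_sanc_iff.mp hi
    obtain ⟨⟨m, hjm, hkm⟩, hkj, hjk⟩ := mem_coparent_iff.mp hk
    exact hdia i k j m ⟨rik, hkm, hij, hjm, hkj, hjk⟩
  -- (1,4)
  · obtain ⟨hij, -⟩ := mem_sanc_iff.mp hi
    exact (mem_nonrelative_iff.mp hk).1 i hij rik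
  -- (2,1)
  · obtain ⟨-, hij, -⟩ := mem_coparent_iff.mp hi
    exact hij (rik.trans (mem_sanc_iff.mp hk).1)
  -- (2,3)
  · obtain ⟨-, hij, -⟩ := mem_coparent_iff.mp hi
    exact hij (hk ▸ rik)
  -- (3,1)
  · obtain ⟨hkj, hknej⟩ := mem_sanc_iff.mp hk
    exact hknej (hdag k j hkj (hi ▸ rik))
  -- (3,2)
  · exact (mem_coparent_iff.mp hk).2.2 (hi ▸ rik)
  -- (3,4)
  · exact (mem_nonrelative_iff.mp hk).2 k (hi ▸ rik) Relation.ReflTransGen.refl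
  -- (3,6)
  · exact (mem_sibling_iff.mp hk).2.2 (hi ▸ rik)
  -- (4,1)
  · exact (mem_nonrelative_iff.mp hi).1 i (rik.trans (mem_sanc_iff.mp hk).1)
      Relation.ReflTransGen.refl
  -- (4,2)
  · obtain ⟨⟨m, hjm, hkm⟩, -, -⟩ := mem_coparent_iff.mp hk
    exact (mem_nonrelative_iff.mp hi).2 m hjm (rik.trans hkm)
  -- (4,3)
  · exact (mem_nonrelative_iff.mp hi).1 i (hk ▸ rik) Relation.ReflTransGen.refl
  -- (4,5)
  · exact (mem_nonrelative_iff.mp hi).2 k (mem_sdes_iff.mp hk).1 rik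
  -- (5,1)
  · obtain ⟨hji, hinej⟩ := mem_sdes_iff.mp hi
    exact hinej (hdag i j (rik.trans (mem_sanc_iff.mp hk).1) hji)
  -- (5,2)
  · exact (mem_coparent_iff.mp hk).2.2 ((mem_sdes_iff.mp hi).1.trans rik)
  -- (5,3)
  · obtain ⟨hji, hinej⟩ := mem_sdes_iff.mp hi
    exact hinej (hdag i j (hk ▸ rik) hji)
  -- (5,4)
  · exact (mem_nonrelative_iff.mp hk).1 j Relation.ReflTransGen.refl
      ((mem_sdes_iff.mp hi).1.trans rik)
  -- (5,6)
  · exact (mem_sibling_iff.mp hk).2.2 ((mem_sdes_iff.mp hi).1.trans rik)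
  -- (6,1)
  · exact (mem_sibling_iff.mp hi).2.1 (rik.trans (mem_sanc_iff.mp hk).1)
  -- (6,2)
  · obtain ⟨⟨m, hmj, hmi⟩, hij, hji⟩ := mem_sibling_iff.mp hi
    obtain ⟨⟨n, hjn, hkn⟩, -, -⟩ := mem_coparent_iff.mp hk
    exact hdia m j i n ⟨hmj, hjn, hmi, rik.trans hkn, hji, hij⟩
  -- (6,3)
  · exact (mem_sibling_iff.mp hi).2.1 (hk ▸ rik)
  -- (6,4)
  · obtain ⟨⟨m, hmj, hmi⟩, -, -⟩ := mem_sibling_iff.mp hi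
    exact (mem_nonrelative_iff.mp hk).1 m hmj (hmi.trans rik)
  -- (6,5)
  · obtain ⟨⟨m, hmj, hmi⟩, hij, hji⟩ := mem_sibling_iff.mp hi
    exact hdia m j i k ⟨hmj, (mem_sdes_iff.mp hk).1, hmi, rik, hji, hij⟩
end

section
/- Let G be a multitree and j ∈ V. If i ∈ sanc(j) and k ∈ coparent(j), then i and k are path-disconnected: neither i → k nor k → i. -/
variable {V : Type*}

/-- In a multitree, a strict ancestor of `j` and a co-parent of
`j` are path-disconnected. -/
theorem sanc_coparent_disconnected [Fintype V] (E : V → V → Prop)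
    (hG : IsMultitree E) (j i k : V)
    (hi : i ∈ sanc E j) (hk : k ∈ coparent E j) :
    ¬ reaches E i k ∧ ¬ reaches E k i := by
  obtain ⟨hij, hine⟩ := hi
  obtain ⟨hkU, hkF⟩ := hk
  simp only [Set.mem_iUnion, des, anc, Set.mem_setOf_eq] at hkU
  obtain ⟨d, hjd, hkd⟩ := hkU
  constructor
  · intro hik
    exact hG.2 i k j d ⟨hik, hkd, hij, hjd, fun h => hkF (Or.inl h),
      fun h => hkF (Or.inr h)⟩
  · intro hki
    exact hkF (Or.inl (hki.trans hij))
end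

section
/- Let G be a multitree and j ∈ V. If i ∈ sibling(j) and k ∈ coparent(j), then there is no directed path from i to k, i.e., ¬(i → k). -/
variable {V : Type*}

/-- In a multitree, there is no directed path from a sibling of
`j` to a co-parent of `j`. -/
theorem sibling_not_reaches_coparent [Fintype V] (E : V → V → Prop)
    (hG : IsMultitree E) (j i k : V)
    (hi : i ∈ sibling E j) (hk : k ∈ coparent E j) :
    ¬ reaches E i k := by
  intro hik
  obtain ⟨hiU, hif⟩ := hi
  obtain ⟨hkU, hkf⟩ := hk
  simp only [Set.mem_iUnion] at hiU hkU
  obtain ⟨a, haj, hai⟩ := hiU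
  obtain ⟨d, hjd, hkd⟩ := hkU
  exact hG.2 a i j d ⟨hai, hik.trans hkd, haj, hjd,
    fun h => hif (Or.inl h), fun h => hif (Or.inr h)⟩
end

section
/- Let G be a multitree and j ∈ V. If i ∈ sibling(j) and k ∈ sdes(j), then i and k are path-disconnected: neither i → k nor k → i. -/
variable {V : Type*}

/-- In a multitree, a sibling of `j` and a strict descendant of
`j` are path-disconnected. -/
theorem sibling_sdes_disconnected [Fintype V] (E : V → V → Prop)
    (hG : IsMultitree E) (j i k : V)
    (hi : i ∈ sibling E j) (hk : k ∈ sdes E j) :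
    ¬ reaches E i k ∧ ¬ reaches E k i := by
  obtain ⟨hiu, hif⟩ := hi
  obtain ⟨hjk, hkj⟩ := hk
  simp only [Set.mem_iUnion] at hiu
  obtain ⟨a, haj, hai⟩ := hiu
  have hij : ¬ reaches E i j := fun h => hif (Or.inl h)
  have hji : ¬ reaches E j i := fun h => hif (Or.inr h)
  constructor
  · intro hik
    exact hG.2 a i j k ⟨hai, hik, haj, hjk, hij, hji⟩
  · intro hki
    exact hji (hjk.trans hki)
end

section
/- Let G be a finite DAG and let k ∈ V and i ∈ sdes(k). Then the ancestor set of i is the disjoint union anc(i) = anc(k) ⊔ (anc(i) ∩ sdes(k)) ⊔ (sanc(i) \ funnel(k)); that is, these three sets are pairwise disjoint and their union is anc(i). -/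
variable {V : Type*}

/-- In a finite DAG, for `i` a strict descendant of `k`, the
ancestor set of `i` is the disjoint union
`anc i = anc k ⊔ (anc i ∩ sdes k) ⊔ (sanc i \ funnel k)`. -/
theorem anc_partition_of_sdes [Fintype V] (E : V → V → Prop) (hG : IsDAG E)
    (k i : V) (hi : i ∈ sdes E k) :
    ([anc E k, anc E i ∩ sdes E k, sanc E i \ funnel E k].Pairwise Disjoint) ∧
    anc E k ∪ (anc E i ∩ sdes E k) ∪ (sanc E i \ funnel E k) = anc E i := by
  obtain ⟨hki, hne⟩ := hi
  have hki : reaches E k i := hki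
  constructor
  · simp only [List.pairwise_cons, List.mem_cons, List.not_mem_nil]
    refine ⟨?_, ?_, ?_⟩
    · rintro s hs
      rcases hs with rfl | hs
      · rw [Set.disjoint_left]
        rintro x hx ⟨_, hkx, hxk⟩
        exact hxk (hG k x hkx hx).symm
      · simp only [List.mem_cons, List.not_mem_nil, or_false] at hs
        subst hs
        rw [Set.disjoint_left]
        rintro x hx ⟨_, hnf⟩
        exact hnf (Or.inl hx)
    · rintro s hs
      simp only [List.mem_cons, List.not_mem_nil, or_false] at hs
      subst hs
      rw [Set.disjoint_left]
      rintro x ⟨_, hkx, _⟩ ⟨_, hnf⟩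
      exact hnf (Or.inr hkx)
    · simp
  · ext x
    simp only [Set.mem_union, Set.mem_inter_iff, Set.mem_diff]
    constructor
    · rintro ((h | ⟨h, _⟩) | ⟨⟨h, _⟩, _⟩)
      · exact Relation.ReflTransGen.trans h hki
      · exact h
      · exact h
    · intro hxi
      by_cases hxk : reaches E x k
      · exact Or.inl (Or.inl hxk)
      by_cases hkx : reaches E k x
      · exact Or.inl (Or.inr ⟨hxi, hkx, fun h => hxk (h ▸ Relation.ReflTransGen.refl)⟩)
      · refine Or.inr ⟨⟨hxi, fun h => hkx (h ▸ hki)⟩, fun h => h.elim hxk hkx⟩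
end
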